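/- arXiv:1007.3880 — 3 statements merged into one kernel-verified Lean document; each statement's English description precedes it below -/
import Mathlib

section
/- Let t_0 := 0 ≤ t_1 < … < t_n ≤ 1 satisfy max_{1≤i≤n}(t_i − t_{i−1}) ≤ c_0/n and 1 − t_n ≤ c_0/n for a constant c_0 ≥ 1, let μ: [0,1] → ℝ and K: ℝ → ℝ be continuously differentiable with K supported in [−1,1], and let b > 0. Then for every t ∈ [0,1], | ∫_0^1 μ(s) (1/b) K((t − s)/b) ds − Σ_{i=1}^n (t_i − t_{i−1}) μ(t_i) (1/b) K((t − t_i)/b) | ≤ (c_0/n) · ( ‖μ‖_∞ ‖K′‖_∞ / b² + ‖μ′‖_∞ ‖K‖_∞ / b + ‖μ‖_∞ ‖K‖_∞ / b ), where ‖·‖_∞ denotes the supremum norm (of μ and μ′ over [0,1], of K and K′ over ℝ). Consequently, in the regression model Y_i = μ(t_i) + ε_i with independent mean-zero errors, E[μ̂_n(t)] = ∫_0^1 μ(s)(1/b)K((t−s)/b) ds + O(1/(n b²)) uniformly in t ∈ [0,1], where μ̂_n(t) = Σ_{i=1}^n (t_i − t_{i−1})(1/b)K((t − t_i)/b)Y_i.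 -/
/-! On each cell `(tᵢ₋₁, tᵢ]` the integrand `u ↦ μ u * b⁻¹ * K ((s - u) / b)` stays within
`L * c₀ / n` of its value at the right endpoint, where `L = ‖μ‖‖K'‖/b² + ‖μ'‖‖K‖/b` is its
Lipschitz constant (mean value theorem); the cells have total length `tₙ ≤ 1`. The uncovered
piece `(tₙ, 1]` has length at most `c₀ / n` and contributes `‖μ‖‖K‖/b`. Since the errors are
centred, the expectation of the estimator is exactly the Riemann sum. -/

open MeasureTheory ProbabilityTheory Filter

noncomputable section

/-- The Priestley–Chao estimator. -/
def pcEst (n : ℕ) (t : ℕ → ℝ) (b : ℝ) (K : ℝ → ℝ) (Y : ℕ → ℝ) (s : ℝ) : ℝ :=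
  ∑ i ∈ Finset.Icc 1 n, (t i - t (i - 1)) * (1 / b) * K ((s - t i) / b) * Y i

open Set

section RiemannSum

variable {f : ℝ → ℝ} {t : ℕ → ℝ} {n : ℕ}

lemma abs_intervalIntegral_sub_mul_right_le {a c ε : ℝ} (hac : a ≤ c)
    (hf : IntervalIntegrable f volume a c) (hε : ∀ u ∈ Ioc a c, |f u - f c| ≤ ε) :
    |(∫ u in a..c, f u) - (c - a) * f c| ≤ (c - a) * ε := by
  have hsub : (∫ u in a..c, f u) - (c - a) * f c = ∫ u in a..c, (f u - f c) := by
    rw [intervalIntegral.integral_sub hf intervalIntegrable_const,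
      intervalIntegral.integral_const, smul_eq_mul]
  have hbound := intervalIntegral.norm_integral_le_of_norm_le_const (C := ε)
    (f := fun u => f u - f c) (by rwa [uIoc_of_le hac])
  rwa [hsub, ← Real.norm_eq_abs, mul_comm, ← abs_of_nonneg (sub_nonneg.2 hac)]

lemma abs_intervalIntegral_sub_riemannSum_le {L : NNReal} {δ : ℝ} (ht : MonotoneOn t (Iic n))
    (hf : LipschitzOnWith L f (Icc (t 0) (t n))) (hgap : ∀ i < n, t (i + 1) - t i ≤ δ) :
    |(∫ u in t 0..t n, f u) - ∑ i ∈ Finset.range n, (t (i + 1) - t i) * f (t (i + 1))|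
      ≤ (t n - t 0) * (L * δ) := by
  have hmem : ∀ i ≤ n, t i ∈ Icc (t 0) (t n) := fun i hi =>
    ⟨ht (Nat.zero_le n) hi (Nat.zero_le i), ht hi self_mem_Iic hi⟩
  have hint : ∀ i < n, IntervalIntegrable f volume (t i) (t (i + 1)) := fun i hi =>
    (hf.continuousOn.mono (uIcc_subset_Icc (hmem i hi.le) (hmem (i + 1) hi))).intervalIntegrable
  have hstep : ∀ i < n, |(∫ u in t i..t (i + 1), f u) - (t (i + 1) - t i) * f (t (i + 1))|
      ≤ (t (i + 1) - t i) * (L * δ) := by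
    intro i hi
    refine abs_intervalIntegral_sub_mul_right_le (ht hi.le hi i.le_succ) (hint i hi)
      fun u hu => ?_
    have hu' : u ∈ Icc (t 0) (t n) :=
      ⟨(hmem i hi.le).1.trans hu.1.le, hu.2.trans (hmem (i + 1) hi).2⟩
    calc |f u - f (t (i + 1))| ≤ L * |u - t (i + 1)| := hf.dist_le_mul u hu' _ (hmem (i + 1) hi)
      _ ≤ L * δ := by
        gcongr
        rw [abs_sub_comm, abs_of_nonneg (by linarith [hu.2])]
        linarith [hu.1, hgap i hi]
  rw [← intervalIntegral.sum_integral_adjacent_intervals hint, ← Finset.sum_sub_distrib]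
  calc _ ≤ ∑ i ∈ Finset.range n,
        |(∫ u in t i..t (i + 1), f u) - (t (i + 1) - t i) * f (t (i + 1))| :=
        Finset.abs_sum_le_sum_abs _ _
    _ ≤ ∑ i ∈ Finset.range n, (t (i + 1) - t i) * (L * δ) :=
        Finset.sum_le_sum fun i hi => hstep i (Finset.mem_range.1 hi)
    _ = _ := by rw [← Finset.sum_mul, Finset.sum_range_sub]

lemma abs_integral_unitInterval_sub_riemannSum_le {L : NNReal} {B δ : ℝ}
    (ht : MonotoneOn t (Iic n)) (ht0 : t 0 = 0) (htn : t n ≤ 1)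
    (hf : LipschitzOnWith L f (Icc 0 1)) (hB : ∀ u ∈ Icc (0 : ℝ) 1, |f u| ≤ B)
    (hgap : ∀ i < n, t (i + 1) - t i ≤ δ) (hlast : 1 - t n ≤ δ) :
    |(∫ u in (0 : ℝ)..1, f u) - ∑ i ∈ Finset.range n, (t (i + 1) - t i) * f (t (i + 1))|
      ≤ δ * (L + B) := by
  have htn0 : 0 ≤ t n := ht0 ▸ ht (Nat.zero_le n) self_mem_Iic (Nat.zero_le n)
  have hB0 : 0 ≤ B := (abs_nonneg _).trans (hB 0 ⟨le_rfl, zero_le_one⟩)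
  have hδ : 0 ≤ δ := by linarith
  have hint : ∀ a ∈ Icc (0 : ℝ) 1, ∀ c ∈ Icc (0 : ℝ) 1, IntervalIntegrable f volume a c :=
    fun a ha c hc => (hf.continuousOn.mono (uIcc_subset_Icc ha hc)).intervalIntegrable
  have head := abs_intervalIntegral_sub_riemannSum_le ht
    (hf.mono (ht0 ▸ Icc_subset_Icc_right htn)) hgap
  rw [ht0, sub_zero] at head
  have tail : |∫ u in t n..1, f u| ≤ B * (1 - t n) := by
    have := intervalIntegral.norm_integral_le_of_norm_le_const (C := B) (f := f) (a := t n)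
      (b := 1) fun u hu => hB u ⟨htn0.trans (uIoc_of_le htn ▸ hu).1.le, (uIoc_of_le htn ▸ hu).2⟩
    rwa [abs_of_nonneg (sub_nonneg.2 htn)] at this
  rw [← intervalIntegral.integral_add_adjacent_intervals
    (hint 0 ⟨le_rfl, zero_le_one⟩ _ ⟨htn0, htn⟩) (hint _ ⟨htn0, htn⟩ 1 ⟨zero_le_one, le_rfl⟩),
    add_sub_right_comm]
  calc _ ≤ t n * (L * δ) + B * (1 - t n) := (abs_add_le _ _).trans (add_le_add head tail)
    _ ≤ 1 * (L * δ) + B * δ := by gcongr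
    _ = δ * (L + B) := by ring

end RiemannSum

lemma lipschitzOnWith_mul_rescaled {μ K : ℝ → ℝ} {s : Set ℝ} {x b A A' C C' : ℝ} (hb : 0 < b)
    (hs : Convex ℝ s) (hμ : DifferentiableOn ℝ μ s) (hK : Differentiable ℝ K)
    (hA : ∀ u ∈ s, |μ u| ≤ A) (hA' : ∀ u ∈ s, |derivWithin μ s u| ≤ A')
    (hC : ∀ v, |K v| ≤ C) (hC' : ∀ v, |deriv K v| ≤ C') :
    LipschitzOnWith (A * C' / b ^ 2 + A' * C / b).toNNReal
      (fun u => μ u * (1 / b) * K ((x - u) / b)) s := by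
  have hder : ∀ u ∈ s, HasDerivWithinAt (fun u => μ u * (1 / b) * K ((x - u) / b))
      (derivWithin μ s u * (1 / b) * K ((x - u) / b)
        + μ u * (1 / b) * (deriv K ((x - u) / b) * (-(1 / b)))) s u := by
    intro u hu
    have hin : HasDerivAt (fun v : ℝ => (x - v) / b) (-(1 / b)) u := by
      simpa [neg_div] using ((hasDerivAt_id u).const_sub x).div_const b
    exact ((hμ u hu).hasDerivWithinAt.mul_const _).mul
      ((hK _).hasDerivAt.comp u hin).hasDerivWithinAt
  refine LipschitzOnWith.of_dist_le' fun u hu v hv => ?_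
  refine hs.norm_image_sub_le_of_norm_hasDerivWithin_le hder (fun w hw => ?_) hv hu
  have hA0 : 0 ≤ A := (abs_nonneg _).trans (hA w hw)
  have hA'0 : 0 ≤ A' := (abs_nonneg _).trans (hA' w hw)
  calc _ ≤ |derivWithin μ s w| * (1 / b) * |K ((x - w) / b)|
        + |μ w| * (1 / b) * (|deriv K ((x - w) / b)| * (1 / b)) := by
        refine (norm_add_le _ _).trans_eq ?_
        simp only [Real.norm_eq_abs, abs_mul, abs_neg, abs_of_pos (one_div_pos.2 hb)]
    _ ≤ A' * (1 / b) * C + A * (1 / b) * (C' * (1 / b)) := by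
        gcongr
        exacts [hA' w hw, hC _, hA w hw, hC' _]
    _ = A * C' / b ^ 2 + A' * C / b := by field_simp; ring

lemma ContinuousOn.le_ciSup_of_isCompact {X : Type*} [TopologicalSpace X] {s : Set X}
    {g : X → ℝ} (hg : ContinuousOn g s) (hs : IsCompact s) {u : X} (hu : u ∈ s) :
    g u ≤ ⨆ v : s, g v :=
  le_ciSup (image_eq_range g s ▸ hs.bddAbove_image hg) ⟨u, hu⟩

lemma Continuous.le_ciSup_of_hasCompactSupport {X : Type*} [TopologicalSpace X] {g : X → ℝ}
    (hg : Continuous g) (hsupp : HasCompactSupport g) (u : X) : g u ≤ ⨆ v, g v :=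
  le_ciSup (hg.bddAbove_range_of_hasCompactSupport hsupp) u

lemma integral_pcEst {Ω : Type*} [MeasurableSpace Ω] {P : Measure Ω} (n : ℕ) (t : ℕ → ℝ)
    (b : ℝ) (K : ℝ → ℝ) {Y : ℕ → Ω → ℝ} (hY : ∀ i ∈ Finset.Icc 1 n, Integrable (Y i) P) (s : ℝ) :
    ∫ ω, pcEst n t b K (fun i => Y i ω) s ∂P = pcEst n t b K (fun i => ∫ ω, Y i ω ∂P) s := by
  simp only [pcEst]
  rw [integral_finsetSum _ fun i hi => (hY i hi).const_mul _]
  simp only [integral_const_mul]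

lemma abs_integral_mul_rescaled_sub_sum_le {n : ℕ} {t : ℕ → ℝ} {δ : ℝ} {μ K : ℝ → ℝ}
    {b A A' C C' : ℝ} (x : ℝ) (ht : MonotoneOn t (Iic n)) (ht0 : t 0 = 0) (htn : t n ≤ 1)
    (hgap : ∀ i < n, t (i + 1) - t i ≤ δ) (hlast : 1 - t n ≤ δ) (hb : 0 < b)
    (hμ : DifferentiableOn ℝ μ (Icc 0 1)) (hK : Differentiable ℝ K)
    (hA : ∀ u ∈ Icc (0 : ℝ) 1, |μ u| ≤ A)
    (hA' : ∀ u ∈ Icc (0 : ℝ) 1, |derivWithin μ (Icc 0 1) u| ≤ A')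
    (hC : ∀ v, |K v| ≤ C) (hC' : ∀ v, |deriv K v| ≤ C') :
    |(∫ u in (0 : ℝ)..1, μ u * (1 / b) * K ((x - u) / b))
        - ∑ i ∈ Finset.Icc 1 n, (t i - t (i - 1)) * (1 / b) * K ((x - t i) / b) * μ (t i)|
      ≤ δ * (A * C' / b ^ 2 + A' * C / b + A * C / b) := by
  have hA0 : 0 ≤ A := (abs_nonneg _).trans (hA 0 ⟨le_rfl, zero_le_one⟩)
  have hA'0 : 0 ≤ A' := (abs_nonneg _).trans (hA' 0 ⟨le_rfl, zero_le_one⟩)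
  have hC0 : 0 ≤ C := (abs_nonneg _).trans (hC 0)
  have hC'0 : 0 ≤ C' := (abs_nonneg _).trans (hC' 0)
  have hbound : ∀ u ∈ Icc (0 : ℝ) 1, |μ u * (1 / b) * K ((x - u) / b)| ≤ A * C / b := by
    intro u hu
    rw [abs_mul, abs_mul, abs_of_pos (one_div_pos.2 hb), mul_right_comm, mul_one_div]
    gcongr
    exacts [hA u hu, hC _]
  have h := abs_integral_unitInterval_sub_riemannSum_le ht ht0 htn
    (lipschitzOnWith_mul_rescaled (x := x) hb (convex_Icc 0 1) hμ hK hA hA' hC hC') hbound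
    hgap hlast
  rw [Real.coe_toNNReal _ (by positivity)] at h
  convert h using 3
  rw [← Finset.Ico_add_one_right_eq_Icc, Finset.sum_Ico_eq_sum_range]
  refine Finset.sum_congr rfl fun i _ => ?_
  simp only [add_tsub_cancel_right, add_comm 1 i]
  ring

theorem statement7_general
    {Ω : Type*} [MeasurableSpace Ω] (P : Measure Ω) [IsProbabilityMeasure P]
    (n : ℕ) (c0 : ℝ)
    (t : ℕ → ℝ) (ht0 : t 0 = 0) (ht1 : 0 ≤ t 1) (htn : t n ≤ 1)
    (hmono : ∀ i, 1 ≤ i → i < n → t i < t (i + 1))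
    (hgap : ∀ i, 1 ≤ i → i ≤ n → t i - t (i - 1) ≤ c0 / n)
    (hlast : 1 - t n ≤ c0 / n)
    (μ : ℝ → ℝ) (hμ : ContDiffOn ℝ 1 μ (Set.Icc 0 1))
    (K : ℝ → ℝ) (hK : ContDiff ℝ 1 K)
    (hKsupp : ∀ u, u ∉ Set.Icc (-1 : ℝ) 1 → K u = 0)
    (b : ℝ) (hb : 0 < b)
    (e : ℕ → Ω → ℝ)
    (hint : ∀ i ∈ Finset.Icc 1 n, Integrable (e i) P)
    (hmean : ∀ i ∈ Finset.Icc 1 n, (∫ ω, e i ω ∂P) = 0)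
    (Y : ℕ → Ω → ℝ) (hY : ∀ i ω, Y i ω = μ (t i) + e i ω) :
    (∀ s ∈ Set.Icc (0 : ℝ) 1,
      |(∫ u in (0 : ℝ)..1, μ u * (1 / b) * K ((s - u) / b))
        - ∑ i ∈ Finset.Icc 1 n, (t i - t (i - 1)) * (1 / b) * K ((s - t i) / b) * μ (t i)|
      ≤ (c0 / n) *
        ((⨆ u : (Set.Icc (0 : ℝ) 1 : Set ℝ), |μ u|) * (⨆ u : ℝ, |deriv K u|) / b ^ 2
          + (⨆ u : (Set.Icc (0 : ℝ) 1 : Set ℝ), |derivWithin μ (Set.Icc 0 1) u|)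
              * (⨆ u : ℝ, |K u|) / b
          + (⨆ u : (Set.Icc (0 : ℝ) 1 : Set ℝ), |μ u|) * (⨆ u : ℝ, |K u|) / b))
    ∧
    (∀ s ∈ Set.Icc (0 : ℝ) 1,
      |(∫ ω, pcEst n t b K (fun i => Y i ω) s ∂P)
        - ∫ u in (0 : ℝ)..1, μ u * (1 / b) * K ((s - u) / b)|
      ≤ (c0 / n) *
        ((⨆ u : (Set.Icc (0 : ℝ) 1 : Set ℝ), |μ u|) * (⨆ u : ℝ, |deriv K u|) / b ^ 2
          + (⨆ u : (Set.Icc (0 : ℝ) 1 : Set ℝ), |derivWithin μ (Set.Icc 0 1) u|)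
              * (⨆ u : ℝ, |K u|) / b
          + (⨆ u : (Set.Icc (0 : ℝ) 1 : Set ℝ), |μ u|) * (⨆ u : ℝ, |K u|) / b)) := by
  have ht : MonotoneOn t (Iic n) := monotoneOn_of_le_add_one ordConnected_Iic
    fun i _ _ hi => by
      rcases i.eq_zero_or_pos with rfl | hi0
      · simpa [ht0] using ht1
      · exact (hmono i hi0 hi).le
  have hstep : ∀ i < n, t (i + 1) - t i ≤ c0 / n := fun i hi => by
    simpa using hgap (i + 1) (by omega) hi
  have hKc : HasCompactSupport K := HasCompactSupport.intro isCompact_Icc hKsupp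
  have riemann := fun s => abs_integral_mul_rescaled_sub_sum_le s ht ht0 htn hstep hlast hb
    (hμ.differentiableOn one_ne_zero) (hK.differentiable one_ne_zero)
    (fun u hu => hμ.continuousOn.abs.le_ciSup_of_isCompact isCompact_Icc hu)
    (fun u hu => (hμ.continuousOn_derivWithin (uniqueDiffOn_Icc zero_lt_one) le_rfl).abs
      |>.le_ciSup_of_isCompact isCompact_Icc hu)
    (hK.continuous.abs.le_ciSup_of_hasCompactSupport hKc.abs)
    ((hK.continuous_deriv le_rfl).abs.le_ciSup_of_hasCompactSupport hKc.deriv.abs)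
  refine ⟨fun s _ => riemann s, fun s _ => ?_⟩
  have hY_int : ∀ i ∈ Finset.Icc 1 n, Integrable (Y i) P := fun i hi => by
    rw [funext (hY i)]
    exact (integrable_const _).add (hint i hi)
  have hY_mean : ∀ i ∈ Finset.Icc 1 n, ∫ ω, Y i ω ∂P = μ (t i) := fun i hi => by
    simp [hY, integral_add (integrable_const _) (hint i hi), hmean i hi]
  rw [integral_pcEst n t b K hY_int, abs_sub_comm, pcEst, Finset.sum_congr rfl fun i hi => by
    rw [hY_mean i hi]]
  exact riemann s

theorem statement7
    {Ω : Type*} [MeasurableSpace Ω] (P : Measure Ω) [IsProbabilityMeasure P]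
    (n : ℕ) (hn : 1 ≤ n) (c0 : ℝ) (hc0 : 1 ≤ c0)
    (t : ℕ → ℝ) (ht0 : t 0 = 0) (ht1 : 0 ≤ t 1) (htn : t n ≤ 1)
    (hmono : ∀ i, 1 ≤ i → i < n → t i < t (i + 1))
    (hgap : ∀ i, 1 ≤ i → i ≤ n → t i - t (i - 1) ≤ c0 / n)
    (hlast : 1 - t n ≤ c0 / n)
    (μ : ℝ → ℝ) (hμ : ContDiffOn ℝ 1 μ (Set.Icc 0 1))
    (K : ℝ → ℝ) (hK : ContDiff ℝ 1 K)
    (hKsupp : ∀ u, u ∉ Set.Icc (-1 : ℝ) 1 → K u = 0)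
    (b : ℝ) (hb : 0 < b)
    (e : ℕ → Ω → ℝ) (hmeas : ∀ i, Measurable (e i))
    (hindep : iIndepFun
      (fun i : (Finset.Icc 1 n : Finset ℕ) => e i) P)
    (hint : ∀ i ∈ Finset.Icc 1 n, Integrable (e i) P)
    (hmean : ∀ i ∈ Finset.Icc 1 n, (∫ ω, e i ω ∂P) = 0)
    (Y : ℕ → Ω → ℝ) (hY : ∀ i ω, Y i ω = μ (t i) + e i ω) :
    (∀ s ∈ Set.Icc (0 : ℝ) 1,
      |(∫ u in (0 : ℝ)..1, μ u * (1 / b) * K ((s - u) / b))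
        - ∑ i ∈ Finset.Icc 1 n, (t i - t (i - 1)) * (1 / b) * K ((s - t i) / b) * μ (t i)|
      ≤ (c0 / n) *
        ((⨆ u : (Set.Icc (0 : ℝ) 1 : Set ℝ), |μ u|) * (⨆ u : ℝ, |deriv K u|) / b ^ 2
          + (⨆ u : (Set.Icc (0 : ℝ) 1 : Set ℝ), |derivWithin μ (Set.Icc 0 1) u|)
              * (⨆ u : ℝ, |K u|) / b
          + (⨆ u : (Set.Icc (0 : ℝ) 1 : Set ℝ), |μ u|) * (⨆ u : ℝ, |K u|) / b))
    ∧
    (∀ s ∈ Set.Icc (0 : ℝ) 1,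
      |(∫ ω, pcEst n t b K (fun i => Y i ω) s ∂P)
        - ∫ u in (0 : ℝ)..1, μ u * (1 / b) * K ((s - u) / b)|
      ≤ (c0 / n) *
        ((⨆ u : (Set.Icc (0 : ℝ) 1 : Set ℝ), |μ u|) * (⨆ u : ℝ, |deriv K u|) / b ^ 2
          + (⨆ u : (Set.Icc (0 : ℝ) 1 : Set ℝ), |derivWithin μ (Set.Icc 0 1) u|)
              * (⨆ u : ℝ, |K u|) / b
          + (⨆ u : (Set.Icc (0 : ℝ) 1 : Set ℝ), |μ u|) * (⨆ u : ℝ, |K u|) / b)) :=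
  statement7_general P n c0 t ht0 ht1 htn hmono hgap hlast μ hμ K hK hKsupp b hb e hint hmean Y hY
end
end

section
/- Let t_0 := 0 ≤ t_1 < … < t_n ≤ 1 satisfy max_{1≤i≤n}(t_i − t_{i−1}) ≤ c_0/n and 1 − t_n ≤ c_0/n for a constant c_0 ≥ 1, let μ: [0,1] → ℝ be continuously differentiable, let K: ℝ → ℝ be twice continuously differentiable and supported in [−1,1], and let b > 0. Then for every t ∈ [0,1], | ∫_0^1 μ(s) (1/b²) K′((t − s)/b) ds − Σ_{i=1}^n (t_i − t_{i−1}) μ(t_i) (1/b²) K′((t − t_i)/b) | ≤ (c_0/n) · ( ‖μ‖_∞ ‖K″‖_∞ / b³ + ‖μ′‖_∞ ‖K′‖_∞ / b² + ‖μ‖_∞ ‖K′‖_∞ / b² ), where ‖·‖_∞ denotes the supremum norm (of μ and μ′ over [0,1], of K′ and K″ over ℝ). Consequently, in the regression model Y_i = μ(t_i) + ε_i with independent mean-zero errors, E[μ̂_n′(t)] = ∫_0^1 μ(s)(1/b²)K′((t−s)/b) ds + O(1/(n b³)) uniformly in t ∈ [0,1], where μ̂_n′ is the derivative of the Priestley–Chao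 estimator μ̂_n(t) = Σ_{i=1}^n (t_i − t_{i−1})(1/b)K((t − t_i)/b)Y_i. -/
/-!
The derivative of the estimator is again a Priestley–Chao sum, with kernel `K'` and an extra
factor `1 / b`, and its expectation replaces each `Y i` by `μ (t i)`. What remains is a
right-endpoint Riemann sum for `∫₀¹ f` with `f u = μ u · b⁻² K'((s - u) / b)`. On each cell
the error is at most `L · h · (t i - t (i - 1))`, where `h = c₀ / n` bounds the mesh and
`L = ‖μ′‖ ‖K′‖ / b² + ‖μ‖ ‖K″‖ / b³` is a Lipschitz constant of `f` (product rule and the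
mean value inequality); the uncovered piece `[t n, 1]` costs at most `h · ‖μ‖ ‖K′‖ / b²`.
-/

open MeasureTheory ProbabilityTheory Filter

noncomputable section

lemma Finset.sum_Icc_one_eq_sum_range {M : Type*} [AddCommMonoid M] (g : ℕ → M) (n : ℕ) :
    ∑ i ∈ Finset.Icc 1 n, g i = ∑ k ∈ Finset.range n, g (k + 1) := by
  rw [Finset.range_eq_Ico, Finset.sum_Ico_add' g 0 n 1]
  rfl

lemma abs_le_iSup_abs_of_isCompact {α : Type*} [TopologicalSpace α] {g : α → ℝ} {s : Set α}
    (hs : IsCompact s) (hg : ContinuousOn g s) {x : α} (hx : x ∈ s) :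
    |g x| ≤ ⨆ u : s, |g u| := by
  refine le_ciSup (f := fun u : s => |g u|) ?_ ⟨x, hx⟩
  have := hs.bddAbove_image hg.abs
  rwa [Set.image_eq_range] at this

lemma abs_le_iSup_abs_of_hasCompactSupport {α : Type*} [TopologicalSpace α] {g : α → ℝ}
    (hg : Continuous g) (hgc : HasCompactSupport g) (x : α) : |g x| ≤ ⨆ u, |g u| :=
  le_ciSup (hg.abs.bddAbove_range_of_hasCompactSupport hgc.abs) x

section RiemannSum

open Set Interval

variable {f : ℝ → ℝ}

lemma abs_integral_sub_mul_right_le {a b C : ℝ} (hab : a ≤ b)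
    (hf : IntervalIntegrable f volume a b) (hC : ∀ x ∈ Icc a b, |f x - f b| ≤ C) :
    |(∫ u in a..b, f u) - (b - a) * f b| ≤ C * (b - a) := by
  have hconst : (b - a) * f b = ∫ _ in a..b, f b := by
    rw [intervalIntegral.integral_const, smul_eq_mul]
  rw [hconst, ← intervalIntegral.integral_sub hf intervalIntegrable_const]
  have hbound : ∀ x ∈ Ι a b, ‖f x - f b‖ ≤ C := fun x hx =>
    hC x (Ioc_subset_Icc_self (by rwa [uIoc_of_le hab] at hx))
  simpa [abs_of_nonneg (sub_nonneg.2 hab)] using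
    intervalIntegral.norm_integral_le_of_norm_le_const hbound

lemma MonotoneOn.mem_Icc {t : ℕ → ℝ} {n : ℕ} {a b : ℝ} (ht : MonotoneOn t (Iic n))
    (ht0 : t 0 = a) (htn : t n ≤ b) {k : ℕ} (hk : k ≤ n) : t k ∈ Icc a b :=
  ⟨ht0 ▸ ht (mem_Iic.2 n.zero_le) (mem_Iic.2 hk) k.zero_le,
    (ht (mem_Iic.2 hk) (mem_Iic.2 le_rfl) hk).trans htn⟩

lemma integral_sub_sum_right_eq {t : ℕ → ℝ} {n : ℕ} {a b : ℝ} (ht0 : t 0 = a)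
    (hcell : ∀ k < n, IntervalIntegrable f volume (t k) (t (k + 1)))
    (htail : IntervalIntegrable f volume (t n) b) :
    (∫ u in a..b, f u) - ∑ k ∈ Finset.range n, (t (k + 1) - t k) * f (t (k + 1))
      = ∑ k ∈ Finset.range n,
          ((∫ u in t k..t (k + 1), f u) - (t (k + 1) - t k) * f (t (k + 1)))
        + ∫ u in t n..b, f u := by
  have hhead : IntervalIntegrable f volume (t 0) (t n) :=
    IntervalIntegrable.trans_iterate hcell
  rw [Finset.sum_sub_distrib, intervalIntegral.sum_integral_adjacent_intervals hcell, ← ht0,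
    ← intervalIntegral.integral_add_adjacent_intervals hhead htail]
  ring

theorem abs_integral_sub_sum_right_le {t : ℕ → ℝ} {n : ℕ} {a b h L B : ℝ}
    (ht : MonotoneOn t (Iic n)) (ht0 : t 0 = a) (htn : t n ≤ b)
    (hgap : ∀ k < n, t (k + 1) - t k ≤ h) (hlast : b - t n ≤ h) (hL : 0 ≤ L)
    (hf : IntervalIntegrable f volume a b)
    (hlip : ∀ x ∈ Icc a b, ∀ y ∈ Icc a b, |f x - f y| ≤ L * |x - y|)
    (hB : ∀ x ∈ Icc a b, |f x| ≤ B) :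
    |(∫ u in a..b, f u) - ∑ k ∈ Finset.range n, (t (k + 1) - t k) * f (t (k + 1))|
      ≤ h * (L * (b - a) + B) := by
  have hmem : ∀ k ≤ n, t k ∈ Icc a b := fun k hk => ht.mem_Icc ht0 htn hk
  have hab : a ≤ b := nonempty_Icc.1 ⟨t 0, hmem 0 n.zero_le⟩
  have hint : ∀ x ∈ Icc a b, ∀ y ∈ Icc a b, IntervalIntegrable f volume x y := by
    intro x hx y hy
    rw [← uIcc_of_le hab] at hx hy
    exact hf.mono_set (uIcc_subset_uIcc hx hy)
  have hcell : ∀ k < n, |(∫ u in t k..t (k + 1), f u) - (t (k + 1) - t k) * f (t (k + 1))|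
      ≤ L * h * (t (k + 1) - t k) := by
    intro k hk
    have htk := hmem k hk.le
    have htk1 := hmem (k + 1) hk
    refine abs_integral_sub_mul_right_le (ht (mem_Iic.2 hk.le) (mem_Iic.2 hk) k.le_succ)
      (hint _ htk _ htk1) ?_
    intro x hx
    calc |f x - f (t (k + 1))| ≤ L * |x - t (k + 1)| :=
          hlip x ⟨htk.1.trans hx.1, hx.2.trans htk1.2⟩ _ htk1
      _ ≤ L * h := by
          gcongr
          rw [abs_sub_comm, abs_of_nonneg (sub_nonneg.2 hx.2)]
          linarith [hx.1, hgap k hk]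
  have htail : |∫ u in t n..b, f u| ≤ B * (b - t n) := by
    have hbound : ∀ x ∈ Ι (t n) b, ‖f x‖ ≤ B := by
      intro x hx
      rw [uIoc_of_le htn] at hx
      exact hB x ⟨(hmem n le_rfl).1.trans hx.1.le, hx.2⟩
    simpa [abs_of_nonneg (sub_nonneg.2 htn)] using
      intervalIntegral.norm_integral_le_of_norm_le_const hbound
  have hdecomp := integral_sub_sum_right_eq ht0
    (fun k hk => hint _ (hmem k hk.le) _ (hmem (k + 1) hk)) (hint _ (hmem n le_rfl) b ⟨hab, le_rfl⟩)
  have hB0 : 0 ≤ B := (abs_nonneg _).trans (hB a ⟨le_rfl, hab⟩)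
  have hh : 0 ≤ h := by linarith
  calc _ ≤ ∑ k ∈ Finset.range n,
          |(∫ u in t k..t (k + 1), f u) - (t (k + 1) - t k) * f (t (k + 1))|
        + |∫ u in t n..b, f u| := by
        rw [hdecomp]
        exact (abs_add_le _ _).trans (add_le_add_left (Finset.abs_sum_le_sum_abs _ _) _)
    _ ≤ ∑ k ∈ Finset.range n, L * h * (t (k + 1) - t k) + B * (b - t n) :=
        add_le_add (Finset.sum_le_sum fun k hk => hcell k (Finset.mem_range.1 hk)) htail
    _ = L * h * (t n - a) + B * (b - t n) := by
        rw [← Finset.mul_sum, Finset.sum_range_sub, ht0]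
    _ ≤ h * (L * (b - a) + B) := by
        have : L * h * (t n - a) ≤ L * h * (b - a) := by gcongr
        have : B * (b - t n) ≤ B * h := by gcongr
        linarith

end RiemannSum

lemma abs_mul_sub_mul_le_of_hasDerivWithinAt {g k g' k' : ℝ → ℝ} {s : Set ℝ} (hs : Convex ℝ s)
    (hg : ∀ x ∈ s, HasDerivWithinAt g (g' x) s x) (hk : ∀ x ∈ s, HasDerivWithinAt k (k' x) s x)
    {A A' C C' : ℝ} (hgA : ∀ x ∈ s, |g x| ≤ A) (hg'A' : ∀ x ∈ s, |g' x| ≤ A')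
    (hkC : ∀ x ∈ s, |k x| ≤ C) (hk'C' : ∀ x ∈ s, |k' x| ≤ C') :
    ∀ x ∈ s, ∀ y ∈ s, |g x * k x - g y * k y| ≤ (A' * C + A * C') * |x - y| := by
  have hderiv : ∀ x ∈ s, ‖g' x * k x + g x * k' x‖ ≤ A' * C + A * C' := by
    intro x hx
    rw [Real.norm_eq_abs]
    refine (abs_add_le _ _).trans (add_le_add ?_ ?_) <;> rw [abs_mul]
    · exact mul_le_mul (hg'A' x hx) (hkC x hx) (abs_nonneg _) ((abs_nonneg _).trans (hg'A' x hx))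
    · exact mul_le_mul (hgA x hx) (hk'C' x hx) (abs_nonneg _) ((abs_nonneg _).trans (hgA x hx))
  intro x hx y hy
  simpa only [Real.norm_eq_abs, Pi.mul_apply] using
    hs.norm_image_sub_le_of_norm_hasDerivWithin_le (fun z hz => (hg z hz).mul (hk z hz))
      hderiv hy hx

lemma HasDerivAt.comp_const_sub_div {g : ℝ → ℝ} {g' s b u : ℝ}
    (hg : HasDerivAt g g' ((s - u) / b)) :
    HasDerivAt (fun v => g ((s - v) / b)) (-(g' / b)) u := by
  have hin : HasDerivAt (fun v => (s - v) / b) (-1 / b) u :=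
    ((hasDerivAt_id u).const_sub s).div_const b
  exact (hg.comp u hin).congr_deriv (by ring)

lemma abs_mul_comp_const_sub_div_sub_le {μ μ' G G' : ℝ → ℝ} {S : Set ℝ} (hS : Convex ℝ S)
    (hμ : ∀ x ∈ S, HasDerivWithinAt μ (μ' x) S x) (hG : ∀ u, HasDerivAt G (G' u) u)
    {M0 M1 N1 N2 b : ℝ} (hb : 0 < b) (hM0 : ∀ x ∈ S, |μ x| ≤ M0) (hM1 : ∀ x ∈ S, |μ' x| ≤ M1)
    (hN1 : ∀ u, |G u| ≤ N1) (hN2 : ∀ u, |G' u| ≤ N2) (s : ℝ) :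
    ∀ x ∈ S, ∀ y ∈ S, |μ x * (G ((s - x) / b) / b ^ 2) - μ y * (G ((s - y) / b) / b ^ 2)|
      ≤ (M1 * (N1 / b ^ 2) + M0 * (N2 / b ^ 3)) * |x - y| := by
  have hk : ∀ u, HasDerivAt (fun v => G ((s - v) / b) / b ^ 2) (-(G' ((s - u) / b) / b ^ 3)) u :=
    fun u => ((hG _).comp_const_sub_div.div_const (b ^ 2)).congr_deriv (by ring)
  refine abs_mul_sub_mul_le_of_hasDerivWithinAt hS hμ (fun u _ => (hk u).hasDerivWithinAt)
    hM0 hM1 (fun u _ => ?_) (fun u _ => ?_)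
  · rw [abs_div, abs_of_pos (pow_pos hb 2)]
    exact div_le_div_of_nonneg_right (hN1 _) (pow_pos hb 2).le
  · rw [abs_neg, abs_div, abs_of_pos (pow_pos hb 3)]
    exact div_le_div_of_nonneg_right (hN2 _) (pow_pos hb 3).le

lemma monotoneOn_Iic_of_le_succ {α : Type*} [Preorder α] {t : ℕ → α} {n : ℕ}
    (ht : ∀ i < n, t i ≤ t (i + 1)) : MonotoneOn t (Set.Iic n) :=
  monotoneOn_of_le_succ Set.ordConnected_Iic fun i _ _ hi => by
    rw [Order.succ_eq_add_one] at hi ⊢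
    exact ht i hi

theorem abs_integral_sub_sum_kernelDeriv_le (n : ℕ) (c0 : ℝ)
    (t : ℕ → ℝ) (ht0 : t 0 = 0) (ht1 : 0 ≤ t 1) (htn : t n ≤ 1)
    (hmono : ∀ i, 1 ≤ i → i < n → t i < t (i + 1))
    (hgap : ∀ i, 1 ≤ i → i ≤ n → t i - t (i - 1) ≤ c0 / n)
    (hlast : 1 - t n ≤ c0 / n)
    (μ : ℝ → ℝ) (hμ : ContDiffOn ℝ 1 μ (Set.Icc 0 1))
    (K : ℝ → ℝ) (hK : ContDiff ℝ 2 K)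
    (hKsupp : ∀ u, u ∉ Set.Icc (-1 : ℝ) 1 → K u = 0)
    (b : ℝ) (hb : 0 < b) (s : ℝ) :
    |(∫ u in (0 : ℝ)..1, μ u * (1 / b ^ 2) * deriv K ((s - u) / b))
        - ∑ i ∈ Finset.Icc 1 n,
            (t i - t (i - 1)) * (1 / b ^ 2) * deriv K ((s - t i) / b) * μ (t i)|
      ≤ (c0 / n) *
        ((⨆ u : (Set.Icc (0 : ℝ) 1 : Set ℝ), |μ u|) * (⨆ u : ℝ, |deriv (deriv K) u|) / b ^ 3
          + (⨆ u : (Set.Icc (0 : ℝ) 1 : Set ℝ), |derivWithin μ (Set.Icc 0 1) u|)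
              * (⨆ u : ℝ, |deriv K u|) / b ^ 2
          + (⨆ u : (Set.Icc (0 : ℝ) 1 : Set ℝ), |μ u|) * (⨆ u : ℝ, |deriv K u|) / b ^ 2) := by
  set M0 := ⨆ u : (Set.Icc (0 : ℝ) 1 : Set ℝ), |μ u|
  set M1 := ⨆ u : (Set.Icc (0 : ℝ) 1 : Set ℝ), |derivWithin μ (Set.Icc 0 1) u|
  set N1 := ⨆ u : ℝ, |deriv K u|
  set N2 := ⨆ u : ℝ, |deriv (deriv K) u|
  have hK1 : ContDiff ℝ 1 (deriv K) := (contDiff_succ_iff_deriv.1 (hK : ContDiff ℝ (1 + 1) K)).2.2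
  have hKc : HasCompactSupport K := HasCompactSupport.intro isCompact_Icc hKsupp
  have hM0 : ∀ u ∈ Set.Icc (0 : ℝ) 1, |μ u| ≤ M0 := fun u hu =>
    abs_le_iSup_abs_of_isCompact isCompact_Icc hμ.continuousOn hu
  have hM1 : ∀ u ∈ Set.Icc (0 : ℝ) 1, |derivWithin μ (Set.Icc 0 1) u| ≤ M1 := fun u hu =>
    abs_le_iSup_abs_of_isCompact isCompact_Icc
      (hμ.continuousOn_derivWithin (uniqueDiffOn_Icc one_pos) le_rfl) hu
  have hN1 : ∀ u, |deriv K u| ≤ N1 :=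
    abs_le_iSup_abs_of_hasCompactSupport hK1.continuous hKc.deriv
  have hN2 : ∀ u, |deriv (deriv K) u| ≤ N2 :=
    abs_le_iSup_abs_of_hasCompactSupport (hK1.continuous_deriv le_rfl) hKc.deriv.deriv
  have hM0nn : 0 ≤ M0 := Real.iSup_nonneg fun _ => abs_nonneg _
  have hM1nn : 0 ≤ M1 := Real.iSup_nonneg fun _ => abs_nonneg _
  have hN1nn : 0 ≤ N1 := Real.iSup_nonneg fun _ => abs_nonneg _
  have hN2nn : 0 ≤ N2 := Real.iSup_nonneg fun _ => abs_nonneg _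
  have hlip := abs_mul_comp_const_sub_div_sub_le (convex_Icc 0 1)
    (fun u hu => (hμ.differentiableOn one_ne_zero u hu).hasDerivWithinAt)
    (fun u => (hK1.differentiable one_ne_zero u).hasDerivAt) hb hM0 hM1 hN1 hN2 s
  have hbound : ∀ u ∈ Set.Icc (0 : ℝ) 1,
      |μ u * (deriv K ((s - u) / b) / b ^ 2)| ≤ M0 * (N1 / b ^ 2) := fun u hu => by
    rw [abs_mul, abs_div, abs_of_pos (pow_pos hb 2)]
    exact mul_le_mul (hM0 u hu) (div_le_div_of_nonneg_right (hN1 _) (pow_pos hb 2).le)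
      (by positivity) hM0nn
  have hmonoOn : MonotoneOn t (Set.Iic n) := monotoneOn_Iic_of_le_succ fun i hi => by
    rcases i with _ | i
    · rwa [ht0]
    · exact (hmono _ i.succ_pos hi).le
  have hfint : IntervalIntegrable (fun u => μ u * (deriv K ((s - u) / b) / b ^ 2)) volume 0 1 := by
    refine (hμ.continuousOn.mul (Continuous.continuousOn ?_)).intervalIntegrable_of_Icc zero_le_one
    exact (hK1.continuous.comp ((continuous_const.sub continuous_id).div_const b)).div_const _
  have hriemann := abs_integral_sub_sum_right_le hmonoOn ht0 htn
    (fun k hk => hgap (k + 1) k.succ_pos hk) hlast (by positivity) hfint hlip hbound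
  rw [Finset.sum_Icc_one_eq_sum_range]
  simp only [Nat.add_sub_cancel]
  convert hriemann using 2
  · congr 1
    · exact intervalIntegral.integral_congr fun u _ => by ring
    · exact Finset.sum_congr rfl fun i _ => by ring
  · ring

lemma hasDerivAt_pcEst (n : ℕ) (t : ℕ → ℝ) (b : ℝ) {K : ℝ → ℝ} (hK : Differentiable ℝ K)
    (Y : ℕ → ℝ) (s : ℝ) :
    HasDerivAt (pcEst n t b K Y) (pcEst n t b (deriv K) Y s / b) s := by
  have hterm : ∀ i ∈ Finset.Icc 1 n, HasDerivAt
      (fun v => (t i - t (i - 1)) * (1 / b) * K ((v - t i) / b) * Y i)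
      ((t i - t (i - 1)) * (1 / b) * (deriv K ((s - t i) / b) * (1 / b)) * Y i) s := by
    intro i _
    have hin : HasDerivAt (fun v => (v - t i) / b) (1 / b) s := by
      simpa using ((hasDerivAt_id s).sub_const (t i)).div_const b
    exact (((hK _).hasDerivAt.comp s hin).const_mul _).mul_const _
  refine (HasDerivAt.fun_sum hterm).congr_deriv ?_
  rw [pcEst, Finset.sum_div]
  exact Finset.sum_congr rfl fun i _ => by ring

lemma integral_pcEst_add {Ω : Type*} [MeasurableSpace Ω] {P : Measure Ω}
    [IsProbabilityMeasure P] (n : ℕ) (t : ℕ → ℝ) (b : ℝ) (K : ℝ → ℝ) (m : ℕ → ℝ)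
    {e : ℕ → Ω → ℝ} (hint : ∀ i ∈ Finset.Icc 1 n, Integrable (e i) P)
    (hmean : ∀ i ∈ Finset.Icc 1 n, (∫ ω, e i ω ∂P) = 0) (s : ℝ) :
    ∫ ω, pcEst n t b K (fun i => m i + e i ω) s ∂P = pcEst n t b K m s := by
  have hterm : ∀ i ∈ Finset.Icc 1 n, Integrable
      (fun ω => (t i - t (i - 1)) * (1 / b) * K ((s - t i) / b) * (m i + e i ω)) P :=
    fun i hi => ((integrable_const _).add (hint i hi)).const_mul _
  simp only [pcEst]
  rw [integral_finsetSum _ hterm]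
  refine Finset.sum_congr rfl fun i hi => ?_
  rw [integral_const_mul, integral_add (integrable_const _) (hint i hi), hmean i hi]
  simp

theorem statement8_general
    {Ω : Type*} [MeasurableSpace Ω] (P : Measure Ω) [IsProbabilityMeasure P]
    (n : ℕ) (c0 : ℝ)
    (t : ℕ → ℝ) (ht0 : t 0 = 0) (ht1 : 0 ≤ t 1) (htn : t n ≤ 1)
    (hmono : ∀ i, 1 ≤ i → i < n → t i < t (i + 1))
    (hgap : ∀ i, 1 ≤ i → i ≤ n → t i - t (i - 1) ≤ c0 / n)
    (hlast : 1 - t n ≤ c0 / n)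
    (μ : ℝ → ℝ) (hμ : ContDiffOn ℝ 1 μ (Set.Icc 0 1))
    (K : ℝ → ℝ) (hK : ContDiff ℝ 2 K)
    (hKsupp : ∀ u, u ∉ Set.Icc (-1 : ℝ) 1 → K u = 0)
    (b : ℝ) (hb : 0 < b)
    (e : ℕ → Ω → ℝ)
    (hint : ∀ i ∈ Finset.Icc 1 n, Integrable (e i) P)
    (hmean : ∀ i ∈ Finset.Icc 1 n, (∫ ω, e i ω ∂P) = 0)
    (Y : ℕ → Ω → ℝ) (hY : ∀ i ω, Y i ω = μ (t i) + e i ω) :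
    (∀ s ∈ Set.Icc (0 : ℝ) 1,
      |(∫ u in (0 : ℝ)..1, μ u * (1 / b ^ 2) * deriv K ((s - u) / b))
        - ∑ i ∈ Finset.Icc 1 n,
            (t i - t (i - 1)) * (1 / b ^ 2) * deriv K ((s - t i) / b) * μ (t i)|
      ≤ (c0 / n) *
        ((⨆ u : (Set.Icc (0 : ℝ) 1 : Set ℝ), |μ u|) * (⨆ u : ℝ, |deriv (deriv K) u|) / b ^ 3
          + (⨆ u : (Set.Icc (0 : ℝ) 1 : Set ℝ), |derivWithin μ (Set.Icc 0 1) u|)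
              * (⨆ u : ℝ, |deriv K u|) / b ^ 2
          + (⨆ u : (Set.Icc (0 : ℝ) 1 : Set ℝ), |μ u|) * (⨆ u : ℝ, |deriv K u|) / b ^ 2))
    ∧
    (∀ s ∈ Set.Icc (0 : ℝ) 1,
      |(∫ ω, deriv (pcEst n t b K (fun i => Y i ω)) s ∂P)
        - ∫ u in (0 : ℝ)..1, μ u * (1 / b ^ 2) * deriv K ((s - u) / b)|
      ≤ (c0 / n) *
        ((⨆ u : (Set.Icc (0 : ℝ) 1 : Set ℝ), |μ u|) * (⨆ u : ℝ, |deriv (deriv K) u|) / b ^ 3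
          + (⨆ u : (Set.Icc (0 : ℝ) 1 : Set ℝ), |derivWithin μ (Set.Icc 0 1) u|)
              * (⨆ u : ℝ, |deriv K u|) / b ^ 2
          + (⨆ u : (Set.Icc (0 : ℝ) 1 : Set ℝ), |μ u|) * (⨆ u : ℝ, |deriv K u|) / b ^ 2)) := by
  have hbias := abs_integral_sub_sum_kernelDeriv_le n c0 t ht0 ht1 htn hmono hgap hlast
    μ hμ K hK hKsupp b hb
  refine ⟨fun s _ => hbias s, fun s _ => ?_⟩
  have hderiv : ∀ ω, deriv (pcEst n t b K fun i => Y i ω) s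
      = pcEst n t b (deriv K) (fun i => μ (t i) + e i ω) s / b := fun ω => by
    simp_rw [hY]
    exact (hasDerivAt_pcEst n t b (hK.differentiable (by norm_num)) _ s).deriv
  simp_rw [hderiv, integral_div, integral_pcEst_add n t b _ _ hint hmean]
  rw [abs_sub_comm]
  convert hbias s using 4
  rw [pcEst, Finset.sum_div]
  exact Finset.sum_congr rfl fun i _ => by ring

theorem statement8
    {Ω : Type*} [MeasurableSpace Ω] (P : Measure Ω) [IsProbabilityMeasure P]
    (n : ℕ) (hn : 1 ≤ n) (c0 : ℝ) (hc0 : 1 ≤ c0)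
    (t : ℕ → ℝ) (ht0 : t 0 = 0) (ht1 : 0 ≤ t 1) (htn : t n ≤ 1)
    (hmono : ∀ i, 1 ≤ i → i < n → t i < t (i + 1))
    (hgap : ∀ i, 1 ≤ i → i ≤ n → t i - t (i - 1) ≤ c0 / n)
    (hlast : 1 - t n ≤ c0 / n)
    (μ : ℝ → ℝ) (hμ : ContDiffOn ℝ 1 μ (Set.Icc 0 1))
    (K : ℝ → ℝ) (hK : ContDiff ℝ 2 K)
    (hKsupp : ∀ u, u ∉ Set.Icc (-1 : ℝ) 1 → K u = 0)
    (b : ℝ) (hb : 0 < b)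
    (e : ℕ → Ω → ℝ) (hmeas : ∀ i, Measurable (e i))
    (hindep : iIndepFun
      (fun i : (Finset.Icc 1 n : Finset ℕ) => e i) P)
    (hint : ∀ i ∈ Finset.Icc 1 n, Integrable (e i) P)
    (hmean : ∀ i ∈ Finset.Icc 1 n, (∫ ω, e i ω ∂P) = 0)
    (Y : ℕ → Ω → ℝ) (hY : ∀ i ω, Y i ω = μ (t i) + e i ω) :
    (∀ s ∈ Set.Icc (0 : ℝ) 1,
      |(∫ u in (0 : ℝ)..1, μ u * (1 / b ^ 2) * deriv K ((s - u) / b))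
        - ∑ i ∈ Finset.Icc 1 n,
            (t i - t (i - 1)) * (1 / b ^ 2) * deriv K ((s - t i) / b) * μ (t i)|
      ≤ (c0 / n) *
        ((⨆ u : (Set.Icc (0 : ℝ) 1 : Set ℝ), |μ u|) * (⨆ u : ℝ, |deriv (deriv K) u|) / b ^ 3
          + (⨆ u : (Set.Icc (0 : ℝ) 1 : Set ℝ), |derivWithin μ (Set.Icc 0 1) u|)
              * (⨆ u : ℝ, |deriv K u|) / b ^ 2
          + (⨆ u : (Set.Icc (0 : ℝ) 1 : Set ℝ), |μ u|) * (⨆ u : ℝ, |deriv K u|) / b ^ 2))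
    ∧
    (∀ s ∈ Set.Icc (0 : ℝ) 1,
      |(∫ ω, deriv (pcEst n t b K (fun i => Y i ω)) s ∂P)
        - ∫ u in (0 : ℝ)..1, μ u * (1 / b ^ 2) * deriv K ((s - u) / b)|
      ≤ (c0 / n) *
        ((⨆ u : (Set.Icc (0 : ℝ) 1 : Set ℝ), |μ u|) * (⨆ u : ℝ, |deriv (deriv K) u|) / b ^ 3
          + (⨆ u : (Set.Icc (0 : ℝ) 1 : Set ℝ), |derivWithin μ (Set.Icc 0 1) u|)
              * (⨆ u : ℝ, |deriv K u|) / b ^ 2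
          + (⨆ u : (Set.Icc (0 : ℝ) 1 : Set ℝ), |μ u|) * (⨆ u : ℝ, |deriv K u|) / b ^ 2)) :=
  statement8_general P n c0 t ht0 ht1 htn hmono hgap hlast μ hμ K hK hKsupp b hb e hint hmean Y hY
end
end

section
/- Let t_0 := 0 ≤ t_1 < … < t_n ≤ 1 be deterministic design points satisfying the design condition with constants c_0, c_1 ≥ 1, let K: ℝ → ℝ be bounded and supported in [−1,1], and let b > 0. Then for every s ∈ ℝ, Σ_{i=1}^n (t_i − t_{i−1})² (1/b)² K((s − t_i)/b)² ≤ (c_0² c_1 ‖K‖_∞² / (n b)) · max(2, 1/(n b)), where ‖K‖_∞ = sup_u |K(u)|. In particular, in the fixed-design regression model with independent mean-zero errors ε_i of common variance σ², the random variable Z(s) = Σ_{i=1}^n (t_i − t_{i−1}) (1/b) K((s − t_i)/b) ε_i satisfies E[Z(s)²] ≤ (c_0² c_1 σ² ‖K‖_∞² / (n b)) · max(2, 1/(n b)). -/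
/-!
A weight `(t i - t (i - 1)) / b * K ((s - t i) / b)` is at most `(c0 / n) * ‖K‖_∞ / b`, and it
vanishes unless `|t i - s| ≤ b`. Clipping `[s - b, s + b]` to `[0, 1]`, the design condition
bounds the number of such `i` by `c1 * n * max (2 * b) (1 / n)`, which gives the bound on the sum
of squared weights. The errors are pairwise independent and centred, hence uncorrelated, so
`E[Z(s)²]` is `σ²` times that sum.
-/

open MeasureTheory ProbabilityTheory Filter

noncomputable section

/-- Design condition on the deterministic design points `t 1 < … < t n` (with `t 0 = 0`). -/
def DesignCond (n : ℕ) (t : ℕ → ℝ) (c0 c1 : ℝ) : Prop :=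
  1 ≤ c0 ∧ 1 ≤ c1 ∧ t 0 = 0 ∧ 0 ≤ t 1 ∧ t n ≤ 1 ∧
  (∀ i, 1 ≤ i → i < n → t i < t (i + 1)) ∧
  (∀ i, 1 ≤ i → i ≤ n → t i - t (i - 1) ≤ c0 / n) ∧
  (∀ a c : ℝ, 0 ≤ a → a ≤ c → c ≤ 1 →
    (((Finset.Icc 1 n).filter (fun i => t i ∈ Set.Icc a c)).card : ℝ) / n
      ≤ c1 * max (c - a) (1 / n))

theorem integral_sq_sum_mul_eq_of_pairwise_indepFun {Ω ι : Type*} [MeasurableSpace Ω]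
    {P : Measure Ω} [IsFiniteMeasure P] {s : Finset ι} {e : ι → Ω → ℝ} (a : ι → ℝ)
    (hL2 : ∀ i ∈ s, MemLp (e i) 2 P) (hindep : Set.Pairwise ↑s fun i j => e i ⟂ᵢ[P] e j)
    (hmean : ∀ i ∈ s, ∫ ω, e i ω ∂P = 0) :
    ∫ ω, (∑ i ∈ s, a i * e i ω) ^ 2 ∂P = ∑ i ∈ s, a i ^ 2 * ∫ ω, e i ω ^ 2 ∂P := by
  set X : ι → Ω → ℝ := fun i ω => a i * e i ω
  have hX : ∀ i ∈ s, MemLp (X i) 2 P := fun i hi => (hL2 i hi).const_mul (a i)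
  have hXindep : Set.Pairwise ↑s fun i j => X i ⟂ᵢ[P] X j := fun i hi j hj hij =>
    (hindep hi hj hij).comp (measurable_const_mul (a i)) (measurable_const_mul (a j))
  have hsum_mean : ∫ ω, (∑ i ∈ s, X i) ω ∂P = 0 := by
    simp only [Finset.sum_apply]
    rw [integral_finsetSum s fun i hi => (hX i hi).integrable one_le_two]
    exact Finset.sum_eq_zero fun i hi => by simp [X, integral_const_mul, hmean i hi]
  have hsum_meas : AEMeasurable (∑ i ∈ s, X i) P :=
    Finset.aemeasurable_sum s fun i hi => (hX i hi).aestronglyMeasurable.aemeasurable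
  calc ∫ ω, (∑ i ∈ s, a i * e i ω) ^ 2 ∂P = ∫ ω, (∑ i ∈ s, X i) ω ^ 2 ∂P := by
        simp only [Finset.sum_apply, X]
    _ = Var[∑ i ∈ s, X i; P] := (variance_of_integral_eq_zero hsum_meas hsum_mean).symm
    _ = ∑ i ∈ s, Var[X i; P] := IndepFun.variance_sum hX hXindep
    _ = _ := Finset.sum_congr rfl fun i hi => by
        rw [variance_const_mul, variance_of_integral_eq_zero
          (hL2 i hi).aestronglyMeasurable.aemeasurable (hmean i hi)]

theorem mem_Icc_of_kernel_ne_zero {K : ℝ → ℝ}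
    (hKsupp : ∀ u, u ∉ Set.Icc (-1 : ℝ) 1 → K u = 0) {b : ℝ} (hb : 0 < b) {s x : ℝ}
    (hx : K ((s - x) / b) ≠ 0) : x ∈ Set.Icc (s - b) (s + b) := by
  obtain ⟨hlo, hhi⟩ := not_imp_comm.mp (hKsupp _) hx
  rw [le_div_iff₀ hb] at hlo
  rw [div_le_one hb] at hhi
  constructor <;> linarith

namespace DesignCond

variable {n : ℕ} {t : ℕ → ℝ} {c0 c1 : ℝ}

theorem monotoneOn (h : DesignCond n t c0 c1) : MonotoneOn t (Set.Icc 1 n) := by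
  obtain ⟨-, -, -, -, -, hinc, -⟩ := h
  exact monotoneOn_of_le_add_one Set.ordConnected_Icc fun i _ hi hi' =>
    (hinc i hi.1 (by simpa using hi'.2)).le

theorem mem_Icc (h : DesignCond n t c0 c1) {i : ℕ} (hi : i ∈ Finset.Icc 1 n) :
    t i ∈ Set.Icc 0 1 := by
  have hmono := h.monotoneOn
  obtain ⟨-, -, -, ht1, htn, -⟩ := h
  rw [Finset.mem_Icc] at hi
  have hmem : i ∈ Set.Icc 1 n := hi
  exact ⟨ht1.trans (hmono ⟨le_rfl, hi.1.trans hi.2⟩ hmem hi.1),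
    (hmono hmem ⟨hi.1.trans hi.2, le_rfl⟩ hi.2).trans htn⟩

theorem spacing_nonneg (h : DesignCond n t c0 c1) {i : ℕ} (hi : i ∈ Finset.Icc 1 n) :
    0 ≤ t i - t (i - 1) := by
  have hmono := h.monotoneOn
  obtain ⟨-, -, ht0, ht1, -⟩ := h
  rw [Finset.mem_Icc] at hi
  rcases hi.1.eq_or_lt with rfl | hlt
  · simpa [ht0] using ht1
  · exact sub_nonneg.mpr (hmono ⟨by omega, by omega⟩ ⟨hi.1, hi.2⟩ (Nat.sub_le i 1))

theorem sq_spacing_le (h : DesignCond n t c0 c1) {i : ℕ} (hi : i ∈ Finset.Icc 1 n) :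
    (t i - t (i - 1)) ^ 2 ≤ (c0 / n) ^ 2 := by
  have hnonneg := h.spacing_nonneg hi
  obtain ⟨-, -, -, -, -, -, hgap, -⟩ := h
  exact pow_le_pow_left₀ hnonneg
    (hgap i (Finset.mem_Icc.mp hi).1 (Finset.mem_Icc.mp hi).2) 2

theorem card_filter_mem_Icc_le (h : DesignCond n t c0 c1) (hn : 0 < n) (s r : ℝ) :
    (((Finset.Icc 1 n).filter (fun i => t i ∈ Set.Icc (s - r) (s + r))).card : ℝ)
      ≤ c1 * n * max (2 * r) (1 / n) := by
  have h01 : ∀ i ∈ Finset.Icc 1 n, t i ∈ Set.Icc 0 1 := fun i hi => h.mem_Icc hi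
  obtain ⟨-, hc1_ge_one, -, -, -, -, -, hcount⟩ := h
  have hc1 : 0 ≤ c1 := zero_le_one.trans hc1_ge_one
  have hn' : (0 : ℝ) < n := Nat.cast_pos.mpr hn
  set a := max (s - r) 0
  set c := min (s + r) 1
  have hclip : (Finset.Icc 1 n).filter (fun i => t i ∈ Set.Icc (s - r) (s + r))
      = (Finset.Icc 1 n).filter (fun i => t i ∈ Set.Icc a c) := by
    refine Finset.filter_congr fun i hi => ?_
    have hi01 := h01 i hi
    simp only [Set.mem_Icc, a, c, max_le_iff, le_min_iff] at hi01 ⊢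
    tauto
  rw [hclip]
  by_cases hac : a ≤ c
  · have hwindow := hcount a c (le_max_right _ _) hac (min_le_right _ _)
    rw [div_le_iff₀ hn'] at hwindow
    have hca : c - a ≤ 2 * r := by
      linarith [le_max_left (s - r) 0, min_le_left (s + r) 1]
    calc _ ≤ c1 * max (c - a) (1 / n) * n := hwindow
      _ ≤ c1 * max (2 * r) (1 / n) * n := by gcongr
      _ = _ := by ring
  · have hempty : (Finset.Icc 1 n).filter (fun i => t i ∈ Set.Icc a c) = ∅ :=
      Finset.filter_false_of_mem fun i _ hi => hac (hi.1.trans hi.2)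
    rw [hempty, Finset.card_empty, Nat.cast_zero]
    positivity

theorem sum_sq_kernel_weight_le (h : DesignCond n t c0 c1) (hn : 0 < n)
    {K : ℝ → ℝ} {M : ℝ} (hKbd : ∀ u, |K u| ≤ M)
    (hKsupp : ∀ u, u ∉ Set.Icc (-1 : ℝ) 1 → K u = 0) {b : ℝ} (hb : 0 < b) (s : ℝ) :
    ∑ i ∈ Finset.Icc 1 n, (t i - t (i - 1)) ^ 2 * (1 / b) ^ 2 * K ((s - t i) / b) ^ 2
      ≤ c0 ^ 2 * c1 * M ^ 2 / (n * b) * max 2 (1 / (n * b)) := by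
  have hn' : (0 : ℝ) < n := Nat.cast_pos.mpr hn
  set window := (Finset.Icc 1 n).filter (fun i => t i ∈ Set.Icc (s - b) (s + b))
  have hterm : ∀ i ∈ window,
      (t i - t (i - 1)) ^ 2 * (1 / b) ^ 2 * K ((s - t i) / b) ^ 2
        ≤ (c0 / n) ^ 2 * (1 / b) ^ 2 * M ^ 2 := by
    intro i hi
    have hK : K ((s - t i) / b) ^ 2 ≤ M ^ 2 :=
      sq_le_sq' (abs_le.mp (hKbd _)).1 (abs_le.mp (hKbd _)).2
    have hspacing := h.sq_spacing_le (Finset.mem_filter.mp hi).1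
    gcongr
  have hmax : max 2 (1 / (n * b)) = max (2 * b) (1 / n) / b := by
    rw [← max_div_div_right hb.le]
    field_simp
  calc _ = ∑ i ∈ window, (t i - t (i - 1)) ^ 2 * (1 / b) ^ 2 * K ((s - t i) / b) ^ 2 := by
        refine (Finset.sum_filter_of_ne fun i _ hne => ?_).symm
        exact mem_Icc_of_kernel_ne_zero hKsupp hb (by contrapose! hne; simp [hne])
    _ ≤ window.card * ((c0 / n) ^ 2 * (1 / b) ^ 2 * M ^ 2) := by
        simpa using Finset.sum_le_card_nsmul _ _ _ hterm
    _ ≤ c1 * n * max (2 * b) (1 / n) * ((c0 / n) ^ 2 * (1 / b) ^ 2 * M ^ 2) := by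
        gcongr
        exact h.card_filter_mem_Icc_le hn s b
    _ = _ := by
        rw [hmax]
        field_simp

end DesignCond

theorem statement11_general
    {Ω : Type*} [MeasurableSpace Ω] (P : Measure Ω) [IsProbabilityMeasure P]
    (n : ℕ) (hn : 1 ≤ n) (c0 c1 : ℝ)
    (t : ℕ → ℝ) (hdesign : DesignCond n t c0 c1)
    (K : ℝ → ℝ) (hKbd : BddAbove (Set.range fun u => |K u|))
    (hKsupp : ∀ u, u ∉ Set.Icc (-1 : ℝ) 1 → K u = 0)
    (b : ℝ) (hb : 0 < b)
    (e : ℕ → Ω → ℝ)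
    (hindep : iIndepFun
      (fun i : (Finset.Icc 1 n : Finset ℕ) => e i) P)
    (hL2 : ∀ i ∈ Finset.Icc 1 n, MemLp (e i) 2 P)
    (hmean : ∀ i ∈ Finset.Icc 1 n, (∫ ω, e i ω ∂P) = 0)
    (σ2 : ℝ) (hvar : ∀ i ∈ Finset.Icc 1 n, (∫ ω, (e i ω) ^ 2 ∂P) = σ2) :
    (∀ s : ℝ,
      (∑ i ∈ Finset.Icc 1 n,
          (t i - t (i - 1)) ^ 2 * (1 / b) ^ 2 * K ((s - t i) / b) ^ 2)
        ≤ c0 ^ 2 * c1 * (⨆ u : ℝ, |K u|) ^ 2 / (n * b) * max 2 (1 / (n * b)))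
    ∧
    (∀ s : ℝ,
      (∫ ω, (∑ i ∈ Finset.Icc 1 n,
          (t i - t (i - 1)) * (1 / b) * K ((s - t i) / b) * e i ω) ^ 2 ∂P)
        ≤ c0 ^ 2 * c1 * σ2 * (⨆ u : ℝ, |K u|) ^ 2 / (n * b) * max 2 (1 / (n * b))) := by
  have hweights := fun s =>
    hdesign.sum_sq_kernel_weight_le hn (fun u => le_ciSup hKbd u) hKsupp hb s
  refine ⟨hweights, fun s => ?_⟩
  have hσ2 : 0 ≤ σ2 := hvar 1 (by simpa using hn) ▸ integral_nonneg fun ω => sq_nonneg _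
  have hpairwise : Set.Pairwise ↑(Finset.Icc 1 n) fun i j => e i ⟂ᵢ[P] e j :=
    fun i hi j hj hij => hindep.indepFun (i := ⟨i, hi⟩) (j := ⟨j, hj⟩) (by simpa using hij)
  rw [integral_sq_sum_mul_eq_of_pairwise_indepFun _ hL2 hpairwise hmean,
    Finset.sum_congr rfl fun i hi => by rw [hvar i hi, mul_pow, mul_pow], ← Finset.sum_mul]
  calc _ ≤ c0 ^ 2 * c1 * (⨆ u : ℝ, |K u|) ^ 2 / (n * b) * max 2 (1 / (n * b)) * σ2 :=
        mul_le_mul_of_nonneg_right (hweights s) hσ2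
    _ = _ := by ring

theorem statement11
    {Ω : Type*} [MeasurableSpace Ω] (P : Measure Ω) [IsProbabilityMeasure P]
    (n : ℕ) (hn : 1 ≤ n) (c0 c1 : ℝ)
    (t : ℕ → ℝ) (hdesign : DesignCond n t c0 c1)
    (K : ℝ → ℝ) (hKbd : BddAbove (Set.range fun u => |K u|))
    (hKsupp : ∀ u, u ∉ Set.Icc (-1 : ℝ) 1 → K u = 0)
    (b : ℝ) (hb : 0 < b)
    (e : ℕ → Ω → ℝ) (hmeas : ∀ i, Measurable (e i))
    (hindep : iIndepFun
      (fun i : (Finset.Icc 1 n : Finset ℕ) => e i) P)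
    (hL2 : ∀ i ∈ Finset.Icc 1 n, MemLp (e i) 2 P)
    (hmean : ∀ i ∈ Finset.Icc 1 n, (∫ ω, e i ω ∂P) = 0)
    (σ2 : ℝ) (hvar : ∀ i ∈ Finset.Icc 1 n, (∫ ω, (e i ω) ^ 2 ∂P) = σ2) :
    (∀ s : ℝ,
      (∑ i ∈ Finset.Icc 1 n,
          (t i - t (i - 1)) ^ 2 * (1 / b) ^ 2 * K ((s - t i) / b) ^ 2)
        ≤ c0 ^ 2 * c1 * (⨆ u : ℝ, |K u|) ^ 2 / (n * b) * max 2 (1 / (n * b)))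
    ∧
    (∀ s : ℝ,
      (∫ ω, (∑ i ∈ Finset.Icc 1 n,
          (t i - t (i - 1)) * (1 / b) * K ((s - t i) / b) * e i ω) ^ 2 ∂P)
        ≤ c0 ^ 2 * c1 * σ2 * (⨆ u : ℝ, |K u|) ^ 2 / (n * b) * max 2 (1 / (n * b))) :=
  statement11_general P n hn c0 c1 t hdesign K hKbd hKsupp b hb e hindep hL2 hmean σ2 hvar
end
end
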